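/- Let μ₁, μ₂ > 0, β ≥ max{μ₁, μ₂} and γ > 0. Then for all s, t ∈ ℝ one has 0 ≤ 2·F_γ(s,t) ≤ s·∂ₛF_γ(s,t) + t·∂ₜF_γ(s,t) ≤ √β·γ·(s² + t²); moreover, if F(s,t) ≤ γ²/4 then s·∂ₛF_γ(s,t) + t·∂ₜF_γ(s,t) = 4·F_γ(s,t). -/

import Mathlib

/-!
`F_γ = φ_γ ∘ F` for the profile `φ_γ(x) = x` on `x ≤ γ²/4` and `γ√x − γ²/4` beyond, which is
`C¹` with `φ_γ' = 1` resp. `γ/(2√x)`. Since `F` is `4`-homogeneous, Euler's identity gives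
`s ∂ₛF_γ + t ∂ₜF_γ = 4F · φ_γ'(F)`, so everything reduces to one-variable inequalities for
`φ_γ` together with `4F ≤ β (s² + t²)²`, which is where `β ≥ max{μ₁, μ₂}` enters.
-/

/-- `F(s,t) = (1/4)(μ₁ s⁴ + 2β s² t² + μ₂ t⁴)`. -/
noncomputable def F (μ₁ μ₂ β s t : ℝ) : ℝ :=
  (1 / 4) * (μ₁ * s ^ 4 + 2 * β * s ^ 2 * t ^ 2 + μ₂ * t ^ 4)

/-- The truncated nonlinearity `F_γ`. -/
noncomputable def Ftrunc (μ₁ μ₂ β γ s t : ℝ) : ℝ :=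
  if F μ₁ μ₂ β s t ≤ γ ^ 2 / 4 then F μ₁ μ₂ β s t
  else γ * Real.sqrt (F μ₁ μ₂ β s t) - γ ^ 2 / 4

/-- Partial derivative of `F_γ` with respect to the first argument. -/
noncomputable def dsFtrunc (μ₁ μ₂ β γ s t : ℝ) : ℝ :=
  deriv (fun s' => Ftrunc μ₁ μ₂ β γ s' t) s

/-- Partial derivative of `F_γ` with respect to the second argument. -/
noncomputable def dtFtrunc (μ₁ μ₂ β γ s t : ℝ) : ℝ :=
  deriv (fun t' => Ftrunc μ₁ μ₂ β γ s t') t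

open Real Set Filter Topology

lemma hasDerivAt_ite_le {f g : ℝ → ℝ} {a d x : ℝ} (hf : x ≤ a → HasDerivAt f d x)
    (hg : a ≤ x → HasDerivAt g d x) (hfg : f a = g a) :
    HasDerivAt (fun y => if y ≤ a then f y else g y) d x := by
  rcases lt_trichotomy x a with hlt | rfl | hgt
  · refine (hf hlt.le).congr_of_eventuallyEq ?_
    filter_upwards [Iio_mem_nhds hlt] with y hy
    exact if_pos hy.le
  · have hleft : HasDerivWithinAt (fun y => if y ≤ x then f y else g y) d (Iic x) x :=
      (hf le_rfl).hasDerivWithinAt.congr (fun y hy => if_pos hy) (if_pos le_rfl)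
    have hright : HasDerivWithinAt (fun y => if y ≤ x then f y else g y) d (Ici x) x := by
      refine (hg le_rfl).hasDerivWithinAt.congr (fun y hy => ?_) (by simp [hfg])
      rcases (mem_Ici.mp hy).eq_or_lt with rfl | hxy
      · simp [hfg]
      · exact if_neg hxy.not_ge
    simpa only [Iic_union_Ici, hasDerivWithinAt_univ] using hleft.union hright
  · refine (hg hgt.le).congr_of_eventuallyEq ?_
    filter_upwards [Ioi_mem_nhds hgt] with y hy
    exact if_neg (not_le.mpr hy)

section TruncMap

variable {γ x : ℝ}

noncomputable def truncMap (γ x : ℝ) : ℝ :=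
  if x ≤ γ ^ 2 / 4 then x else γ * √x - γ ^ 2 / 4

noncomputable def truncMapDeriv (γ x : ℝ) : ℝ :=
  if x ≤ γ ^ 2 / 4 then 1 else γ / (2 * √x)

lemma sqrt_sq_div_four (hγ : 0 ≤ γ) : √(γ ^ 2 / 4) = γ / 2 := by
  rw [show γ ^ 2 / 4 = (γ / 2) ^ 2 by ring, sqrt_sq (by positivity)]

lemma hasDerivAt_truncMap (hγ : 0 < γ) (x : ℝ) :
    HasDerivAt (truncMap γ) (truncMapDeriv γ x) x := by
  refine hasDerivAt_ite_le (fun hx => ?_) (fun hx => ?_) ?_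
  · simpa only [truncMapDeriv, if_pos hx] using hasDerivAt_id' x
  · have hx0 : 0 < x := lt_of_lt_of_le (by positivity) hx
    refine (((hasDerivAt_sqrt hx0.ne').const_mul γ).sub_const (γ ^ 2 / 4)).congr_deriv ?_
    rcases hx.eq_or_lt with rfl | hlt
    · rw [truncMapDeriv, if_pos le_rfl, sqrt_sq_div_four hγ.le]
      field_simp
    · rw [truncMapDeriv, if_neg hlt.not_ge]
      ring
  · rw [sqrt_sq_div_four hγ.le]
    ring

lemma truncMap_nonneg (hγ : 0 ≤ γ) (hx : 0 ≤ x) : 0 ≤ truncMap γ x := by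
  unfold truncMap
  split_ifs with h
  · exact hx
  · have : γ / 2 ≤ √x := sqrt_sq_div_four hγ ▸ sqrt_le_sqrt (not_le.mp h).le
    nlinarith

lemma four_mul_mul_truncMapDeriv_of_lt (h : γ ^ 2 / 4 < x) :
    4 * x * truncMapDeriv γ x = 2 * γ * √x := by
  have hx : 0 < x := lt_of_le_of_lt (by positivity) h
  have : 0 < √x := sqrt_pos.mpr hx
  rw [truncMapDeriv, if_neg h.not_ge]
  field_simp
  rw [sq_sqrt hx.le]
  ring

lemma two_mul_truncMap_le (hx : 0 ≤ x) :
    2 * truncMap γ x ≤ 4 * x * truncMapDeriv γ x := by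
  by_cases h : x ≤ γ ^ 2 / 4
  · simp only [truncMap, truncMapDeriv, if_pos h]
    linarith
  · rw [four_mul_mul_truncMapDeriv_of_lt (not_le.mp h), truncMap, if_neg h]
    nlinarith

lemma four_mul_mul_truncMapDeriv_le (hγ : 0 < γ) (hx : 0 ≤ x) :
    4 * x * truncMapDeriv γ x ≤ 2 * γ * √x := by
  by_cases h : x ≤ γ ^ 2 / 4
  · have : √x ≤ γ / 2 := sqrt_sq_div_four hγ.le ▸ sqrt_le_sqrt h
    rw [truncMapDeriv, if_pos h]
    nlinarith [sq_sqrt hx, mul_nonneg (sqrt_nonneg x) (sub_nonneg.mpr this)]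
  · exact (four_mul_mul_truncMapDeriv_of_lt (not_le.mp h)).le

end TruncMap

section Nonlinearity

variable {μ₁ μ₂ β : ℝ}

lemma F_nonneg (hμ₁ : 0 ≤ μ₁) (hμ₂ : 0 ≤ μ₂) (hβ : 0 ≤ β) (s t : ℝ) : 0 ≤ F μ₁ μ₂ β s t := by
  unfold F
  positivity

lemma two_mul_sqrt_F_le (hμ₁ : μ₁ ≤ β) (hμ₂ : μ₂ ≤ β) (s t : ℝ) :
    2 * √(F μ₁ μ₂ β s t) ≤ √β * (s ^ 2 + t ^ 2) := by
  have h : 4 * F μ₁ μ₂ β s t ≤ β * (s ^ 2 + t ^ 2) ^ 2 := by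
    unfold F
    nlinarith [mul_nonneg (sub_nonneg.mpr hμ₁) (pow_nonneg (sq_nonneg s) 2),
      mul_nonneg (sub_nonneg.mpr hμ₂) (pow_nonneg (sq_nonneg t) 2)]
  calc 2 * √(F μ₁ μ₂ β s t) = √(4 * F μ₁ μ₂ β s t) := by
        rw [sqrt_mul (by norm_num), show (4 : ℝ) = 2 ^ 2 by norm_num, sqrt_sq two_pos.le]
    _ ≤ √(β * (s ^ 2 + t ^ 2) ^ 2) := sqrt_le_sqrt h
    _ = √β * (s ^ 2 + t ^ 2) := by rw [sqrt_mul' _ (by positivity), sqrt_sq (by positivity)]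

lemma hasDerivAt_F_fst (μ₁ μ₂ β s t : ℝ) :
    HasDerivAt (fun s' => F μ₁ μ₂ β s' t) (μ₁ * s ^ 3 + β * s * t ^ 2) s := by
  have := ((((hasDerivAt_pow 4 s).const_mul μ₁).add
    (((hasDerivAt_pow 2 s).const_mul (2 * β)).mul_const (t ^ 2))).add_const
    (μ₂ * t ^ 4)).const_mul (1 / 4)
  exact this.congr_deriv (by push_cast; ring)

lemma hasDerivAt_F_snd (μ₁ μ₂ β s t : ℝ) :
    HasDerivAt (fun t' => F μ₁ μ₂ β s t') (β * s ^ 2 * t + μ₂ * t ^ 3) t := by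
  have := (((hasDerivAt_const t (μ₁ * s ^ 4)).add
    ((hasDerivAt_pow 2 t).const_mul (2 * β * s ^ 2))).add
    ((hasDerivAt_pow 4 t).const_mul μ₂)).const_mul (1 / 4)
  exact this.congr_deriv (by push_cast; ring)

lemma Ftrunc_eq_truncMap (γ s t : ℝ) : Ftrunc μ₁ μ₂ β γ s t = truncMap γ (F μ₁ μ₂ β s t) := rfl

lemma euler_Ftrunc {γ : ℝ} (hγ : 0 < γ) (s t : ℝ) :
    s * dsFtrunc μ₁ μ₂ β γ s t + t * dtFtrunc μ₁ μ₂ β γ s t =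
      4 * F μ₁ μ₂ β s t * truncMapDeriv γ (F μ₁ μ₂ β s t) := by
  have hs : dsFtrunc μ₁ μ₂ β γ s t =
      truncMapDeriv γ (F μ₁ μ₂ β s t) * (μ₁ * s ^ 3 + β * s * t ^ 2) :=
    ((hasDerivAt_truncMap hγ _).comp s (hasDerivAt_F_fst μ₁ μ₂ β s t)).deriv
  have ht : dtFtrunc μ₁ μ₂ β γ s t =
      truncMapDeriv γ (F μ₁ μ₂ β s t) * (β * s ^ 2 * t + μ₂ * t ^ 3) :=
    ((hasDerivAt_truncMap hγ _).comp t (hasDerivAt_F_snd μ₁ μ₂ β s t)).deriv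
  rw [hs, ht, F]
  ring

end Nonlinearity

theorem stmt_4 (μ₁ μ₂ β : ℝ) (hμ₁ : 0 < μ₁) (hμ₂ : 0 < μ₂) (hβ : max μ₁ μ₂ ≤ β)
    (γ : ℝ) (hγ : 0 < γ) (s t : ℝ) :
    0 ≤ 2 * Ftrunc μ₁ μ₂ β γ s t ∧
    2 * Ftrunc μ₁ μ₂ β γ s t ≤ s * dsFtrunc μ₁ μ₂ β γ s t + t * dtFtrunc μ₁ μ₂ β γ s t ∧
    s * dsFtrunc μ₁ μ₂ β γ s t + t * dtFtrunc μ₁ μ₂ β γ s t ≤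
      Real.sqrt β * γ * (s ^ 2 + t ^ 2) ∧
    (F μ₁ μ₂ β s t ≤ γ ^ 2 / 4 →
      s * dsFtrunc μ₁ μ₂ β γ s t + t * dtFtrunc μ₁ μ₂ β γ s t = 4 * Ftrunc μ₁ μ₂ β γ s t) := by
  have hμ₁β : μ₁ ≤ β := le_of_max_le_left hβ
  have hμ₂β : μ₂ ≤ β := le_of_max_le_right hβ
  have hF : 0 ≤ F μ₁ μ₂ β s t := F_nonneg hμ₁.le hμ₂.le (hμ₁.le.trans hμ₁β) s t
  rw [euler_Ftrunc hγ, Ftrunc_eq_truncMap]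
  refine ⟨by linarith [truncMap_nonneg hγ.le hF], two_mul_truncMap_le hF, ?_, fun h => ?_⟩
  · calc 4 * F μ₁ μ₂ β s t * truncMapDeriv γ (F μ₁ μ₂ β s t)
        ≤ γ * (2 * √(F μ₁ μ₂ β s t)) := by linarith [four_mul_mul_truncMapDeriv_le hγ hF]
      _ ≤ γ * (√β * (s ^ 2 + t ^ 2)) :=
          mul_le_mul_of_nonneg_left (two_mul_sqrt_F_le hμ₁β hμ₂β s t) hγ.le
      _ = √β * γ * (s ^ 2 + t ^ 2) := by ring
  · rw [truncMapDeriv, truncMap, if_pos h, if_pos h]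
    ring
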